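/- Let Q be a lower transition rate operator on a finite nonempty set 𝒳, and let (T_t)_{t≥0} be the associated family of operators determined by the differential equation d/dt T_t f = Q(T_t f) with T_0 f = f, with conjugate T̄_t f := −T_t(−f). Then for all f ∈ 𝓛(𝒳), x ∈ 𝒳 and t, s > 0: (i) if f(x) > min f then T_t f(x) > min f, and moreover T_t f(x) > min f holds if and only if T_s f(x) > min f; (ii) if f(x) < max f then T_t f(x) < max f, and T_t f(x) < max f holds if and only if T_s f(x) < max f; (iii) if f(x) > min f then T̄_t f(x) > min f, and T̄_t f(x) > min f holds if and only if T̄_s f(x) > min f; (iv) if f(x) < max f then T̄_t f(x) < max f, and T̄_t f(x) < max f holds if and only if T̄_s f(x) < max f. -/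

import Mathlib

open Filter Topology

/-- The minimum of a real-valued function on a finite nonempty type. -/
noncomputable def minf {X : Type*} [Fintype X] [Nonempty X] (f : X → ℝ) : ℝ :=
  Finset.univ.inf' Finset.univ_nonempty f

/-- The maximum of a real-valued function on a finite nonempty type. -/
noncomputable def maxf {X : Type*} [Fintype X] [Nonempty X] (f : X → ℝ) : ℝ :=
  Finset.univ.sup' Finset.univ_nonempty f

/-- The (real-valued) indicator function of a set. -/
noncomputable def ind {X : Type*} (A : Set X) : X → ℝ := A.indicator 1

/-- The conjugate (upper) operator `f ↦ -(Q (-f))`. -/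
def conjOp {X : Type*} (Q : (X → ℝ) → (X → ℝ)) : (X → ℝ) → (X → ℝ) :=
  fun f => -(Q (-f))

/-- A lower transition rate operator. -/
def IsLTRO {X : Type*} [Fintype X] (Q : (X → ℝ) → (X → ℝ)) : Prop :=
  (∀ μ : ℝ, Q (fun _ => μ) = 0) ∧
  (∀ f g : X → ℝ, Q f + Q g ≤ Q (f + g)) ∧
  (∀ l : ℝ, 0 ≤ l → ∀ f : X → ℝ, Q (l • f) = l • Q f) ∧
  (∀ x y : X, x ≠ y → 0 ≤ Q (ind {y}) x)

/-- A lower transition operator. -/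
def IsLTO {X : Type*} [Fintype X] [Nonempty X] (T : (X → ℝ) → (X → ℝ)) : Prop :=
  (∀ f : X → ℝ, ∀ x : X, minf f ≤ T f x) ∧
  (∀ f g : X → ℝ, T f + T g ≤ T (f + g)) ∧
  (∀ l : ℝ, 0 ≤ l → ∀ f : X → ℝ, T (l • f) = l • T f)

/-- `T` is the family of operators solving `d/dt T_t f = Q (T_t f)` on `[0,∞)`
with `T_0 f = f`. -/
def IsSol {X : Type*} [Fintype X] (Q : (X → ℝ) → (X → ℝ))
    (T : ℝ → (X → ℝ) → (X → ℝ)) : Prop :=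
  (∀ f : X → ℝ, T 0 f = f) ∧
  (∀ f : X → ℝ, ∀ t : ℝ, 0 ≤ t →
    HasDerivWithinAt (fun s => T s f) (Q (T t f)) (Set.Ici 0) t)

/-- Ergodicity of a lower transition rate operator, expressed via its
associated time-dependent family `T`. -/
def ErgodicQ {X : Type*} [Fintype X] (T : ℝ → (X → ℝ) → (X → ℝ)) : Prop :=
  ∀ f : X → ℝ, ∃ c : ℝ, Tendsto (fun t => T t f) atTop (𝓝 (fun _ : X => c))

/-- Ergodicity of a lower transition operator. -/
def ErgodicT {X : Type*} [Fintype X] (T : (X → ℝ) → (X → ℝ)) : Prop :=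
  ∀ f : X → ℝ, ∃ c : ℝ, Tendsto (fun n : ℕ => T^[n] f) atTop (𝓝 (fun _ : X => c))

/-- `x` is upper reachable from `y` (w.r.t. the lower transition rate operator `Q`). -/
def upperReach {X : Type*} [Fintype X] (Q : (X → ℝ) → (X → ℝ)) (y x : X) : Prop :=
  ∃ (n : ℕ) (p : ℕ → X), p 0 = y ∧ p n = x ∧
    ∀ k : ℕ, k < n → p (k + 1) ≠ p k ∧ 0 < conjOp Q (ind {p (k + 1)}) (p k)

/-- One step of the lower-reachability construction: `A ↦ A ∪ {y ∉ A : Q(𝟙_A)(y) > 0}`. -/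
def lowerStep {X : Type*} [Fintype X] (Q : (X → ℝ) → (X → ℝ)) (A : Set X) : Set X :=
  A ∪ {y : X | y ∉ A ∧ 0 < Q (ind A) y}

/-- `A` is lower reachable from `x`: `x ∈ Aₙ` where `n` is the first index with
`Aₙ = Aₙ₊₁` (equivalently, any such index, since the sequence is determined by
recursion and increasing). -/
def lowerReach {X : Type*} [Fintype X] (Q : (X → ℝ) → (X → ℝ)) (x : X) (A : Set X) : Prop :=
  ∃ n : ℕ, (lowerStep Q)^[n] A = (lowerStep Q)^[n + 1] A ∧ x ∈ (lowerStep Q)^[n] A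

/-- The set `𝒳_RA := {x : ∃ n ≥ 1, min T̄ⁿ 𝟙ₓ > 0}`. -/
noncomputable def XRA {X : Type*} [Fintype X] [Nonempty X]
    (T : (X → ℝ) → (X → ℝ)) : Set X :=
  {x : X | ∃ n : ℕ, 0 < minf ((conjOp T)^[n + 1] (ind {x}))}

/-- A regularly absorbing lower transition operator. -/
def RegAbs {X : Type*} [Fintype X] [Nonempty X] (T : (X → ℝ) → (X → ℝ)) : Prop :=
  (XRA T).Nonempty ∧ ∀ x : X, x ∉ XRA T → ∃ n : ℕ, 0 < T^[n + 1] (ind (XRA T)) x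

/-- The set `𝒳_1A := {x : min T̄ 𝟙ₓ > 0}`. -/
noncomputable def X1A {X : Type*} [Fintype X] [Nonempty X]
    (T : (X → ℝ) → (X → ℝ)) : Set X :=
  {x : X | 0 < minf (conjOp T (ind {x}))}

/-- A 1-step absorbing lower transition operator. -/
def OneStepAbs {X : Type*} [Fintype X] [Nonempty X] (T : (X → ℝ) → (X → ℝ)) : Prop :=
  (X1A T).Nonempty ∧ ∀ x : X, x ∉ X1A T → 0 < T (ind (X1A T)) x

/-- The operator (sup) norm of a non-negatively homogeneous operator. -/
noncomputable def opN {X : Type*} [Fintype X] (Q : (X → ℝ) → (X → ℝ)) : ℝ :=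
  sSup {r : ℝ | ∃ f : X → ℝ, ‖f‖ = 1 ∧ r = ‖Q f‖}


/-! Both `Q` and its conjugate `Q̄` satisfy `R 1 = 0`, positive homogeneity and the one-sided
bound `R g y - R g' y ≤ K (max (g - g') - (g - g') y)`, so it suffices to study a solution of
`h' = R h` for such an `R`, and only the lower side: the upper side and `T̄_t` follow by `f ↦ -f`
and conjugation. The bound gives `R g x ≥ -K (g x - min g)`. Hence the soft-min
`∑ exp (-β h_t)` grows at most exponentially, uniformly in `β`, so `min h_t ≥ min h_0`; then
`(h_t x - min h_0) e^{Kt}` is nondecreasing, so a strict inequality persists forward in time.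
Conversely, if `h_s x = min h_0` with `s > 0`, then on the set `A` where `h_s` attains `min h_0`
every coordinate has an interior minimum in time at `s`, so `R h_s = 0` on `A`. Comparing `h_u`
with a large multiple of `h_s` bounds `R h_u` on `A` by `K ∑_A (h_u - min h_0)`, and Grönwall
keeps that sum at `0`. -/

open Finset

section MinMax

variable {X : Type*} [Fintype X] [Nonempty X]

lemma minf_le (f : X → ℝ) (x : X) : minf f ≤ f x := inf'_le _ (mem_univ x)

lemma le_maxf (f : X → ℝ) (x : X) : f x ≤ maxf f := le_sup' _ (mem_univ x)

lemma le_minf {f : X → ℝ} {c : ℝ} (h : ∀ x, c ≤ f x) : c ≤ minf f :=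
  le_inf' _ _ fun x _ => h x

lemma maxf_le {f : X → ℝ} {c : ℝ} (h : ∀ x, f x ≤ c) : maxf f ≤ c :=
  sup'_le _ _ fun x _ => h x

lemma minf_neg (f : X → ℝ) : minf (-f) = -maxf f := by
  obtain ⟨x, -, hx⟩ := exists_mem_eq_sup' univ_nonempty f
  refine le_antisymm ?_ (le_minf fun y => neg_le_neg (le_maxf f y))
  rw [maxf, hx]
  exact minf_le (-f) x

end MinMax

lemma le_mul_exp_of_hasDerivWithinAt_le {φ φ' : ℝ → ℝ} {a c t : ℝ}
    (hφ : ∀ u, a ≤ u → HasDerivWithinAt φ (φ' u) (Set.Ici a) u)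
    (hle : ∀ u, a ≤ u → φ' u ≤ c * φ u) (ht : a ≤ t) :
    φ t ≤ φ a * Real.exp (c * (t - a)) := by
  have hexp : ∀ u, HasDerivAt (fun v => Real.exp (-(c * v))) (Real.exp (-(c * u)) * -c) u :=
    fun u => by simpa using ((hasDerivAt_id u).const_mul c).neg.exp
  have hanti : AntitoneOn (fun u => φ u * Real.exp (-(c * u))) (Set.Ici a) := by
    refine antitoneOn_of_hasDerivWithinAt_nonpos
      (f' := fun u => φ' u * Real.exp (-(c * u)) + φ u * (Real.exp (-(c * u)) * -c))
      (convex_Ici a) (fun u hu => ((hφ u hu).mul (hexp u).hasDerivWithinAt).continuousWithinAt)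
      (fun u hu => ?_) (fun u hu => ?_)
    · rw [interior_Ici] at hu ⊢
      exact ((hφ u hu.out.le).mul (hexp u).hasDerivWithinAt).mono Set.Ioi_subset_Ici_self
    · rw [interior_Ici] at hu
      have := mul_le_mul_of_nonneg_left (sub_nonpos.2 (hle u hu.out.le))
        (Real.exp_pos (-(c * u))).le
      linarith
  have := hanti Set.self_mem_Ici ht ht
  calc φ t = φ t * Real.exp (-(c * t)) * Real.exp (c * t) := by
        rw [mul_assoc, ← Real.exp_add]; simp
    _ ≤ φ a * Real.exp (-(c * a)) * Real.exp (c * t) := by gcongr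
    _ = φ a * Real.exp (c * (t - a)) := by rw [mul_assoc, ← Real.exp_add]; ring_nf

lemma exists_nonneg_forall_le_mul {ι : Type*} [Finite ι] (P : ι → Prop) (a b : ι → ℝ)
    (hb : ∀ i, P i → 0 < b i) : ∃ μ, 0 ≤ μ ∧ ∀ i, P i → a i ≤ μ * b i := by
  have h : ∀ᶠ μ in atTop, ∀ i, P i → a i ≤ μ * b i := eventually_all.2 fun i => by
    by_cases hi : P i
    · filter_upwards [eventually_ge_atTop (a i / b i)] with μ hμ _
      exact (div_le_iff₀ (hb i hi)).1 hμ
    · exact Eventually.of_forall fun _ h => absurd h hi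
  obtain ⟨μ, hμ, hμ0⟩ := (h.and (eventually_ge_atTop 0)).exists
  exact ⟨μ, hμ0, hμ⟩

structure IsBoundedRate {X : Type*} [Fintype X] [Nonempty X] (R : (X → ℝ) → X → ℝ) (K : ℝ) :
    Prop where
  nonneg : 0 ≤ K
  map_const : ∀ c : ℝ, R (fun _ => c) = 0
  map_smul : ∀ l : ℝ, 0 ≤ l → ∀ g : X → ℝ, R (l • g) = l • R g
  sub_le : ∀ (g g' : X → ℝ) (y : X), R g y - R g' y ≤ K * (maxf (g - g') - (g - g') y)

section LTRO

variable {X : Type*} [Fintype X] {Q : (X → ℝ) → X → ℝ}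

lemma IsLTRO.sum_le (hQ : IsLTRO Q) {ι : Type*} (s : Finset ι) (g : ι → X → ℝ) :
    ∑ i ∈ s, Q (g i) ≤ Q (∑ i ∈ s, g i) := by
  classical
  induction s using Finset.induction_on with
  | empty => exact (hQ.1 0).ge
  | insert i s hi ih =>
    rw [sum_insert hi, sum_insert hi]
    exact (add_le_add_right ih _).trans (hQ.2.1 _ _)

lemma IsLTRO.sum_mul_apply_le (hQ : IsLTRO Q) {d : X → ℝ} (hd : 0 ≤ d) (x : X) :
    ∑ z, d z * Q (ind {z}) x ≤ Q d x := by
  classical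
  have hsum : ∑ z, d z • ind {z} = d := by
    ext w
    simp [ind, Finset.sum_apply, Pi.single_apply]
  calc ∑ z, d z * Q (ind {z}) x = (∑ z, Q (d z • ind {z})) x := by
        simp [hQ.2.2.1 _ (hd _), Finset.sum_apply]
    _ ≤ Q (∑ z, d z • ind {z}) x := hQ.sum_le _ _ x
    _ = Q d x := by rw [hsum]

variable [Nonempty X]

lemma IsLTRO.exists_neg_mul_le (hQ : IsLTRO Q) :
    ∃ K, 0 ≤ K ∧ ∀ g x, -(K * (g x - minf g)) ≤ Q g x := by
  classical
  refine ⟨∑ z, |Q (ind {z}) z|, by positivity, fun g x => ?_⟩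
  set d : X → ℝ := g - fun _ => minf g
  have hd : 0 ≤ d := fun z => sub_nonneg.2 (minf_le g z)
  have hQd : Q d x ≤ Q g x := by
    simpa [hQ.1, d] using hQ.2.1 d (fun _ => minf g) x
  have hoff : 0 ≤ ∑ z ∈ univ.erase x, d z * Q (ind {z}) x :=
    sum_nonneg fun z hz => mul_nonneg (hd z) (hQ.2.2.2 x z (ne_of_mem_erase hz).symm)
  have hdiag : |Q (ind {x}) x| ≤ ∑ z, |Q (ind {z}) z| :=
    single_le_sum (f := fun z => |Q (ind {z}) z|) (fun z _ => abs_nonneg _) (mem_univ x)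
  calc -((∑ z, |Q (ind {z}) z|) * d x) ≤ -(|Q (ind {x}) x| * d x) :=
        neg_le_neg (mul_le_mul_of_nonneg_right hdiag (hd x))
    _ ≤ d x * Q (ind {x}) x := by
        have := mul_le_mul_of_nonneg_left (neg_abs_le (Q (ind {x}) x)) (hd x)
        linarith
    _ ≤ ∑ z, d z * Q (ind {z}) x := by
        rw [← add_sum_erase _ _ (mem_univ x)]; linarith
    _ ≤ Q g x := (hQ.sum_mul_apply_le hd x).trans hQd

lemma IsLTRO.exists_isBoundedRate (hQ : IsLTRO Q) :
    ∃ K, IsBoundedRate Q K ∧ IsBoundedRate (conjOp Q) K := by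
  obtain ⟨K, hK, hlow⟩ := hQ.exists_neg_mul_le
  have key : ∀ g g' y, -Q (g' - g) y ≤ K * (maxf (g - g') - (g - g') y) := fun g g' y => by
    have := hlow (-(g - g')) y
    rw [minf_neg, Pi.neg_apply] at this
    rw [← neg_sub g g']
    linarith
  refine ⟨K, ⟨hK, hQ.1, hQ.2.2.1, fun g g' y => ?_⟩, ⟨hK, fun c => ?_, fun l hl g => ?_,
    fun g g' y => ?_⟩⟩
  · have := hQ.2.1 g (g' - g) y
    rw [add_sub_cancel] at this
    simp only [Pi.add_apply] at this
    linarith [key g g' y]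
  · show -(Q fun _ => -c) = 0
    simp [hQ.1]
  · simp [conjOp, ← smul_neg, hQ.2.2.1 l hl]
  · have := hQ.2.1 (-g') (g' - g) y
    rw [show -g' + (g' - g) = -g by abel] at this
    simp only [conjOp, Pi.add_apply, Pi.neg_apply] at this ⊢
    linarith [key g g' y]

end LTRO

lemma conjOp_conjOp {X : Type*} (Q : (X → ℝ) → X → ℝ) : conjOp (conjOp Q) = Q := by
  funext f
  simp [conjOp]

lemma IsSol.conjOp {X : Type*} [Fintype X] {Q : (X → ℝ) → X → ℝ} {T : ℝ → (X → ℝ) → X → ℝ}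
    (hT : IsSol Q T) : IsSol (conjOp Q) (fun t => conjOp (T t)) :=
  ⟨fun f => by simp [_root_.conjOp, hT.1], fun f t ht => by
    simpa [_root_.conjOp] using (hT.2 (-f) t ht).fun_neg⟩

lemma IsSol.hasDerivWithinAt_apply {X : Type*} [Fintype X] {R : (X → ℝ) → X → ℝ}
    {T : ℝ → (X → ℝ) → X → ℝ} (hT : IsSol R T) (f : X → ℝ) (x : X) {t : ℝ} (ht : 0 ≤ t) :
    HasDerivWithinAt (fun u => T u f x) (R (T t f) x) (Set.Ici 0) t :=
  hasDerivWithinAt_pi.1 (hT.2 f t ht) x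

namespace IsBoundedRate

variable {X : Type*} [Fintype X] [Nonempty X] {R : (X → ℝ) → X → ℝ} {K : ℝ}
  {T : ℝ → (X → ℝ) → X → ℝ}

lemma neg_mul_le (hR : IsBoundedRate R K) (g : X → ℝ) (x : X) :
    -(K * (g x - minf g)) ≤ R g x := by
  have hM : maxf ((fun _ => minf g) - g) ≤ 0 := maxf_le fun z => by simpa using minf_le g z
  have hsub := hR.sub_le (fun _ => minf g) g x
  simp only [hR.map_const, Pi.zero_apply, Pi.sub_apply] at hsub
  linarith [mul_le_mul_of_nonneg_left hM hR.nonneg]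

lemma exp_neg_mul_mul_le (β a m : ℝ) :
    Real.exp (-(β * a)) * (β * (a - m)) ≤ Real.exp (-(β * m)) :=
  calc Real.exp (-(β * a)) * (β * (a - m))
      ≤ Real.exp (-(β * a)) * Real.exp (β * (a - m)) := by
        gcongr; linarith [Real.add_one_le_exp (β * (a - m))]
    _ = Real.exp (-(β * m)) := by rw [← Real.exp_add]; ring_nf

/-- Grönwall applied to the soft-min `∑ z, exp (-β T_u f z)`. -/
lemma exp_mul_sub_le (hR : IsBoundedRate R K) (hT : IsSol R T) (f : X → ℝ) (x : X)
    {β t : ℝ} (hβ : 0 < β) (ht : 0 ≤ t) :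
    Real.exp (β * (minf f - T t f x)) ≤
      (Fintype.card X : ℝ) * Real.exp (Fintype.card X * K * t) := by
  set N : ℝ := (Fintype.card X : ℝ)
  set F : ℝ → ℝ := fun u => ∑ z, Real.exp (-(β * T u f z))
  have hF : ∀ u, 0 ≤ u → HasDerivWithinAt F
      (∑ z, Real.exp (-(β * T u f z)) * -(β * R (T u f) z)) (Set.Ici 0) u := fun u hu =>
    .fun_sum fun z _ => ((hT.hasDerivWithinAt_apply f z hu).const_mul β).neg.exp
  have hF' : ∀ u, 0 ≤ u → ∑ z, Real.exp (-(β * T u f z)) * -(β * R (T u f) z) ≤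
      N * K * F u := fun u _ => by
    obtain ⟨z₀, -, hz₀⟩ := exists_mem_eq_inf' univ_nonempty (T u f)
    have hexp_min : Real.exp (-(β * minf (T u f))) ≤ F u := by
      rw [minf, hz₀]
      exact single_le_sum (f := fun z => Real.exp (-(β * T u f z)))
        (fun z _ => (Real.exp_pos _).le) (mem_univ z₀)
    calc ∑ z, Real.exp (-(β * T u f z)) * -(β * R (T u f) z)
        ≤ ∑ _z : X, K * F u := sum_le_sum fun z _ => by
          have hRz := hR.neg_mul_le (T u f) z
          calc Real.exp (-(β * T u f z)) * -(β * R (T u f) z)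
              = (Real.exp (-(β * T u f z)) * β) * -R (T u f) z := by ring
            _ ≤ (Real.exp (-(β * T u f z)) * β) * (K * (T u f z - minf (T u f))) := by
                gcongr; linarith
            _ = K * (Real.exp (-(β * T u f z)) * (β * (T u f z - minf (T u f)))) := by ring
            _ ≤ K * F u := by
                gcongr
                · exact hR.nonneg
                · exact (exp_neg_mul_mul_le _ _ _).trans hexp_min
      _ = N * K * F u := by rw [sum_const, card_univ, nsmul_eq_mul]; ring
  have hFt := le_mul_exp_of_hasDerivWithinAt_le hF hF' ht
  rw [sub_zero] at hFt
  have hF0 : F 0 ≤ N * Real.exp (-(β * minf f)) := by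
    calc F 0 ≤ ∑ _z : X, Real.exp (-(β * minf f)) := sum_le_sum fun z _ => by
          rw [hT.1 f]; gcongr; exact minf_le f z
      _ = N * Real.exp (-(β * minf f)) := by simp [N]
  have hFx : Real.exp (-(β * T t f x)) ≤ F t :=
    single_le_sum (f := fun z => Real.exp (-(β * T t f z))) (fun z _ => (Real.exp_pos _).le)
      (mem_univ x)
  calc Real.exp (β * (minf f - T t f x))
      = Real.exp (-(β * T t f x)) * Real.exp (β * minf f) := by
        rw [← Real.exp_add]; ring_nf
    _ ≤ N * Real.exp (-(β * minf f)) * Real.exp (N * K * t) * Real.exp (β * minf f) := by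
        gcongr
        exact hFx.trans (hFt.trans (by gcongr))
    _ = N * Real.exp (N * K * t) := by
        rw [mul_right_comm, mul_assoc N, ← Real.exp_add, neg_add_cancel, Real.exp_zero, mul_one]

lemma minf_le_apply (hR : IsBoundedRate R K) (hT : IsSol R T) (f : X → ℝ) {t : ℝ} (ht : 0 ≤ t)
    (x : X) : minf f ≤ T t f x := by
  by_contra! hlt
  set C : ℝ := (Fintype.card X : ℝ) * Real.exp (Fintype.card X * K * t)
  have hC : 0 ≤ C := by positivity
  have hd : 0 < minf f - T t f x := sub_pos.2 hlt
  have := hR.exp_mul_sub_le hT f x (div_pos (by linarith) hd : 0 < (C + 1) / _) ht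
  rw [div_mul_cancel₀ _ hd.ne'] at this
  linarith [Real.add_one_le_exp (C + 1)]

lemma minf_lt_apply_of_le (hR : IsBoundedRate R K) (hT : IsSol R T) (f : X → ℝ) {s t : ℝ}
    (hs : 0 ≤ s) (hst : s ≤ t) (x : X) (hx : minf f < T s f x) : minf f < T t f x := by
  have hφ : ∀ u, s ≤ u → HasDerivWithinAt (fun v => minf f - T v f x) (-R (T u f) x)
      (Set.Ici s) u := fun u hu =>
    ((hT.hasDerivWithinAt_apply f x (hs.trans hu)).mono (Set.Ici_subset_Ici.2 hs)).const_sub _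
  have hφ' : ∀ u, s ≤ u → -R (T u f) x ≤ -K * (minf f - T u f x) := fun u hu => by
    have hmin := hR.minf_le_apply hT f (hs.trans hu)
    have := mul_le_mul_of_nonneg_left (sub_le_sub_left (le_minf hmin) (T u f x)) hR.nonneg
    linarith [hR.neg_mul_le (T u f) x]
  have := le_mul_exp_of_hasDerivWithinAt_le hφ hφ' hst
  have := mul_neg_of_neg_of_pos (sub_neg.2 hx) (Real.exp_pos (-K * (t - s)))
  linarith

lemma apply_eq_zero_of_apply_eq_minf (hR : IsBoundedRate R K) (hT : IsSol R T) (f : X → ℝ)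
    {s : ℝ} (hs : 0 < s) {y : X} (hy : T s f y = minf f) : R (T s f) y = 0 := by
  have hmin : IsLocalMin (fun u => T u f y) s :=
    Filter.mem_of_superset (Ici_mem_nhds hs) fun u hu => by
      show T s f y ≤ T u f y
      rw [hy]
      exact hR.minf_le_apply hT f hu y
  exact hmin.hasDerivAt_eq_zero ((hT.hasDerivWithinAt_apply f y hs.le).hasDerivAt
    (Ici_mem_nhds hs))

/-- `sub_le` against `μ • T_s f`, whose rate vanishes at `y`: for `μ` large, off `A` the
function `T_u f - μ • T_s f` stays below its value at `y`. -/
lemma apply_le_mul_sum (hR : IsBoundedRate R K) (hT : IsSol R T) (f : X → ℝ) {s u : ℝ}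
    (hs : 0 < s) (hsu : s ≤ u) {y : X} (hy : T s f y = minf f) :
    R (T u f) y ≤ K * ∑ z ∈ univ.filter (fun z => T s f z = minf f), (T u f z - minf f) := by
  set m := minf f
  set S := ∑ z ∈ univ.filter (fun z => T s f z = m), (T u f z - m)
  have hmin : ∀ v, s ≤ v → ∀ z, m ≤ T v f z := fun v hv =>
    hR.minf_le_apply hT f (hs.le.trans hv)
  have hSA : ∀ z, T s f z = m → T u f z - m ≤ S := fun z hz =>
    single_le_sum (f := fun z => T u f z - m) (fun z _ => sub_nonneg.2 (hmin u hsu z))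
      (mem_filter.2 ⟨mem_univ z, hz⟩)
  have hS : 0 ≤ S := sum_nonneg fun z _ => sub_nonneg.2 (hmin u hsu z)
  obtain ⟨μ, hμ, hμle⟩ := exists_nonneg_forall_le_mul (fun z => T s f z ≠ m)
    (fun z => T u f z - T u f y) (fun z => T s f z - m)
    fun z hz => sub_pos.2 ((hmin s le_rfl z).lt_of_ne (Ne.symm hz))
  have hmax : maxf (T u f - μ • T s f) - (T u f - μ • T s f) y ≤ S := by
    have hmaxf : maxf (T u f - μ • T s f) ≤ S + (T u f y - μ * m) := maxf_le fun z => by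
      simp only [Pi.sub_apply, Pi.smul_apply, smul_eq_mul]
      by_cases hz : T s f z = m
      · rw [hz]; linarith [hSA z hz, hmin u hsu y]
      · linarith [hμle z hz]
    simp only [Pi.sub_apply, Pi.smul_apply, smul_eq_mul, hy]
    linarith
  have := hR.sub_le (T u f) (μ • T s f) y
  rw [hR.map_smul μ hμ, Pi.smul_apply, hR.apply_eq_zero_of_apply_eq_minf hT f hs hy,
    smul_zero, sub_zero] at this
  exact this.trans (mul_le_mul_of_nonneg_left hmax hR.nonneg)

lemma apply_eq_minf_of_le (hR : IsBoundedRate R K) (hT : IsSol R T) (f : X → ℝ) {s t : ℝ}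
    (hs : 0 < s) (hst : s ≤ t) (x : X) (hx : T s f x = minf f) : T t f x = minf f := by
  set m := minf f
  set A := univ.filter (fun z => T s f z = m)
  have hS : ∀ u, s ≤ u → HasDerivWithinAt (fun v => ∑ z ∈ A, (T v f z - m))
      (∑ z ∈ A, R (T u f) z) (Set.Ici s) u := fun u hu =>
    .fun_sum fun z _ => ((hT.hasDerivWithinAt_apply f z (hs.le.trans hu)).mono
      (Set.Ici_subset_Ici.2 hs.le)).sub_const m
  have hS' : ∀ u, s ≤ u → ∑ z ∈ A, R (T u f) z ≤ (#A * K) * ∑ z ∈ A, (T u f z - m) :=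
    fun u hu => by
      calc ∑ z ∈ A, R (T u f) z ≤ ∑ _z ∈ A, K * ∑ z ∈ A, (T u f z - m) :=
            sum_le_sum fun z hz => hR.apply_le_mul_sum hT f hs hu (mem_filter.1 hz).2
        _ = (#A * K) * ∑ z ∈ A, (T u f z - m) := by rw [sum_const, nsmul_eq_mul, mul_assoc]
  have hSt := le_mul_exp_of_hasDerivWithinAt_le hS hS' hst
  have hS0 : ∑ z ∈ A, (T s f z - m) = 0 :=
    sum_eq_zero fun z hz => sub_eq_zero.2 (mem_filter.1 hz).2
  simp only [hS0, zero_mul] at hSt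
  have hmin : ∀ z, m ≤ T t f z := hR.minf_le_apply hT f (hs.le.trans hst)
  have hxA : T t f x - m ≤ ∑ z ∈ A, (T t f z - m) :=
    single_le_sum (f := fun z => T t f z - m) (fun z _ => sub_nonneg.2 (hmin z))
      (mem_filter.2 ⟨mem_univ x, hx⟩)
  linarith [hmin x]

lemma minf_lt_apply_iff (hR : IsBoundedRate R K) (hT : IsSol R T) (f : X → ℝ) {s t : ℝ}
    (hs : 0 < s) (hst : s ≤ t) (x : X) : minf f < T s f x ↔ minf f < T t f x :=
  ⟨hR.minf_lt_apply_of_le hT f hs.le hst x, fun h => (hR.minf_le_apply hT f hs.le x).lt_of_ne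
    fun heq => h.ne' (hR.apply_eq_minf_of_le hT f hs hst x heq.symm)⟩

theorem minf_lt_solution (hR : IsBoundedRate R K) (hT : IsSol R T) (f : X → ℝ) (x : X)
    {t s : ℝ} (ht : 0 < t) (hs : 0 < s) :
    (minf f < f x → minf f < T t f x) ∧ (minf f < T t f x ↔ minf f < T s f x) := by
  refine ⟨fun hx => hR.minf_lt_apply_of_le hT f le_rfl ht.le x (by rwa [hT.1 f]), ?_⟩
  rcases le_total s t with hst | hts
  · exact (hR.minf_lt_apply_iff hT f hs hst x).symm
  · exact hR.minf_lt_apply_iff hT f ht hts x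

theorem solution_lt_maxf (hR : IsBoundedRate (conjOp R) K) (hT : IsSol R T) (f : X → ℝ)
    (x : X) {t s : ℝ} (ht : 0 < t) (hs : 0 < s) :
    (f x < maxf f → T t f x < maxf f) ∧ (T t f x < maxf f ↔ T s f x < maxf f) := by
  simpa [_root_.conjOp, minf_neg] using hR.minf_lt_solution hT.conjOp (-f) x ht hs

end IsBoundedRate

/-- Min/max sign-preservation properties of `T_t` and its conjugate `T̄_t`. -/
theorem stmt19 {X : Type*} [Fintype X] [Nonempty X]
    (Q : (X → ℝ) → (X → ℝ)) (hQ : IsLTRO Q)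
    (T : ℝ → (X → ℝ) → (X → ℝ)) (hT : IsSol Q T)
    (f : X → ℝ) (x : X) (t s : ℝ) (ht : 0 < t) (hs : 0 < s) :
    ((minf f < f x → minf f < T t f x) ∧
        (minf f < T t f x ↔ minf f < T s f x)) ∧
      ((f x < maxf f → T t f x < maxf f) ∧
        (T t f x < maxf f ↔ T s f x < maxf f)) ∧
      ((minf f < f x → minf f < conjOp (T t) f x) ∧
        (minf f < conjOp (T t) f x ↔ minf f < conjOp (T s) f x)) ∧
      ((f x < maxf f → conjOp (T t) f x < maxf f) ∧
        (conjOp (T t) f x < maxf f ↔ conjOp (T s) f x < maxf f)) := by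
  obtain ⟨K, hQK, hcK⟩ := hQ.exists_isBoundedRate
  have hccK : IsBoundedRate (conjOp (conjOp Q)) K := by rwa [conjOp_conjOp]
  exact ⟨hQK.minf_lt_solution hT f x ht hs, hcK.solution_lt_maxf hT f x ht hs,
    hcK.minf_lt_solution hT.conjOp f x ht hs, hccK.solution_lt_maxf hT.conjOp f x ht hs⟩
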